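/- Let m > 1 be an integer. The map h/k ↦ h/(3h−k) is an order-reversing bijection from F^{≥1/2}(B(2m),m) onto itself, and the map h/k ↦ (k−2h)/(2k−3h) is an order-reversing bijection from F^{≤1/2}(B(2m),m) onto itself. (Here h/k denotes a fraction in lowest terms.) -/
import Mathlib


/-- The Farey sequence `F_n` of order `n`, viewed as the set of rationals `q`
with `0 ≤ q ≤ 1` whose lowest-terms denominator is at most `n`. -/
def Farey (n : ℕ) : Set ℚ :=
  {q : ℚ | 0 ≤ q ∧ q ≤ 1 ∧ q.den ≤ n}

/-- The Farey subsequence `F(B(n),m)`: fractions `h/k ∈ F_n` in lowest terms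
with `h ≤ m` and `k - h ≤ n - m`. -/
def FareyB (n m : ℕ) : Set ℚ :=
  {q : ℚ | 0 ≤ q ∧ q ≤ 1 ∧ q.den ≤ n ∧ q.num ≤ (m : ℤ) ∧
    (q.den : ℤ) - q.num ≤ (n : ℤ) - (m : ℤ)}

/-- `f'` is the predecessor of `f` in the set `S` of rationals. -/
def IsPredIn (S : Set ℚ) (f' f : ℚ) : Prop :=
  f' ∈ S ∧ f ∈ S ∧ f' < f ∧ ∀ g ∈ S, ¬(f' < g ∧ g < f)

/-- `f'` is the successor of `f` in the set `S` of rationals. -/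
def IsSuccIn (S : Set ℚ) (f f' : ℚ) : Prop :=
  f ∈ S ∧ f' ∈ S ∧ f < f' ∧ ∀ g ∈ S, ¬(f < g ∧ g < f')

/-- The left halfsequence `F^{≤1/2}(B(2m),m)`. -/
def FareyBLeft (m : ℕ) : Set ℚ := {q ∈ FareyB (2 * m) m | q ≤ 1 / 2}

/-- The right halfsequence `F^{≥1/2}(B(2m),m)`. -/
def FareyBRight (m : ℕ) : Set ℚ := {q ∈ FareyB (2 * m) m | 1 / 2 ≤ q}

/-- On a fraction `q = h/k` in lowest terms, the map `h/k ↦ h/(3h-k)`. -/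
def phi (q : ℚ) : ℚ := (q.num : ℚ) / (3 * (q.num : ℚ) - (q.den : ℚ))

/-- On a fraction `q = h/k` in lowest terms, the map `h/k ↦ (k-2h)/(2k-3h)`. -/
def psi (q : ℚ) : ℚ :=
  ((q.den : ℚ) - 2 * (q.num : ℚ)) / (2 * (q.den : ℚ) - 3 * (q.num : ℚ))

lemma den_posQ (q : ℚ) : (0:ℚ) < q.den := by exact_mod_cast q.pos

lemma le_one_iff' (q : ℚ) : q ≤ 1 ↔ q.num ≤ (q.den : ℤ) := by
  conv_lhs => rw [← Rat.num_div_den q]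
  rw [div_le_one (den_posQ q)]
  exact_mod_cast Iff.rfl

lemma half_le_iff' (q : ℚ) : 1/2 ≤ q ↔ (q.den : ℤ) ≤ 2 * q.num := by
  conv_lhs => rw [← Rat.num_div_den q]
  rw [div_le_div_iff₀ two_pos (den_posQ q), one_mul,
    show ((q.num:ℚ) * 2) = ((2 * q.num : ℤ) : ℚ) by push_cast; ring]
  exact_mod_cast Iff.rfl

lemma le_half_iff' (q : ℚ) : q ≤ 1/2 ↔ 2 * q.num ≤ (q.den : ℤ) := by
  conv_lhs => rw [← Rat.num_div_den q]
  rw [div_le_div_iff₀ (den_posQ q) two_pos,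
    show ((q.num:ℚ) * 2) = ((2 * q.num : ℤ) : ℚ) by push_cast; ring, one_mul]
  exact_mod_cast Iff.rfl

lemma coprime_num_den (q : ℚ) : IsCoprime q.num (q.den : ℤ) := by
  rw [Int.isCoprime_iff_gcd_eq_one]
  simpa [Int.gcd] using q.reduced

lemma mem_right_iff (m : ℕ) (q : ℚ) :
    q ∈ FareyBRight m ↔ q.num ≤ (q.den : ℤ) ∧ (q.den : ℤ) ≤ 2 * q.num ∧
      q.num ≤ (m : ℤ) ∧ (q.den : ℤ) - q.num ≤ (m : ℤ) := by
  have hd : 1 ≤ (q.den : ℤ) := by exact_mod_cast q.pos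
  simp only [FareyBRight, FareyB, Set.mem_setOf_eq, Set.mem_sep_iff,
    le_one_iff' q, half_le_iff' q, ← Rat.num_nonneg]
  constructor
  · rintro ⟨⟨_, h1, h2, h3, h4⟩, h5⟩
    refine ⟨h1, h5, h3, by push_cast at h4 ⊢; omega⟩
  · rintro ⟨h1, h2, h3, h4⟩
    refine ⟨⟨by omega, h1, ?_, h3, ?_⟩, h2⟩ <;> push_cast <;> omega

lemma mem_left_iff (m : ℕ) (q : ℚ) :
    q ∈ FareyBLeft m ↔ 0 ≤ q.num ∧ 2 * q.num ≤ (q.den : ℤ) ∧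
      (q.den : ℤ) - q.num ≤ (m : ℤ) := by
  have hd : 1 ≤ (q.den : ℤ) := by exact_mod_cast q.pos
  simp only [FareyBLeft, FareyB, Set.mem_setOf_eq, Set.mem_sep_iff,
    le_one_iff' q, le_half_iff' q, ← Rat.num_nonneg]
  constructor
  · rintro ⟨⟨h0, h1, h2, h3, h4⟩, h5⟩
    refine ⟨h0, h5, by push_cast at h4 ⊢; omega⟩
  · rintro ⟨h0, h1, h2⟩
    refine ⟨⟨h0, by omega, ?_, by omega, ?_⟩, h1⟩ <;> push_cast <;> omega

lemma phi_num_den (q : ℚ) (h1 : q.num ≤ (q.den : ℤ)) (h2 : (q.den : ℤ) ≤ 2 * q.num) :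
    (phi q).num = q.num ∧ ((phi q).den : ℤ) = 3 * q.num - (q.den : ℤ) := by
  have hd : 1 ≤ (q.den : ℤ) := by exact_mod_cast q.pos
  have hb : 0 < 3 * q.num - (q.den : ℤ) := by omega
  have hcop : IsCoprime q.num (3 * q.num - (q.den : ℤ)) := by
    have := ((coprime_num_den q).neg_right).add_mul_left_right 3
    rwa [show -(q.den:ℤ) + q.num * 3 = 3 * q.num - (q.den:ℤ) by ring] at this
  have hcop' : Nat.Coprime q.num.natAbs (3 * q.num - (q.den : ℤ)).natAbs :=
    Int.isCoprime_iff_gcd_eq_one.mp hcop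
  have he : phi q = ((q.num : ℚ)) / (((3 * q.num - (q.den : ℤ) : ℤ) : ℚ)) := by
    unfold phi; push_cast; ring_nf
  rw [he]
  exact ⟨Rat.num_div_eq_of_coprime hb hcop', Rat.den_div_eq_of_coprime hb hcop'⟩

lemma psi_num_den (q : ℚ) (h0 : 0 ≤ q.num) (h2 : 2 * q.num ≤ (q.den : ℤ)) :
    (psi q).num = (q.den : ℤ) - 2 * q.num ∧
    ((psi q).den : ℤ) = 2 * (q.den : ℤ) - 3 * q.num := by
  have hd : 1 ≤ (q.den : ℤ) := by exact_mod_cast q.pos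
  have hb : 0 < 2 * (q.den : ℤ) - 3 * q.num := by omega
  have hcop : IsCoprime ((q.den : ℤ) - 2 * q.num) (2 * (q.den : ℤ) - 3 * q.num) := by
    obtain ⟨u, v, huv⟩ := coprime_num_den q
    exact ⟨-(2*u) - 3*v, u + 2*v, by linear_combination huv⟩
  have hcop' := Int.isCoprime_iff_gcd_eq_one.mp hcop
  have he : psi q = ((((q.den : ℤ) - 2 * q.num : ℤ) : ℚ)) /
      (((2 * (q.den : ℤ) - 3 * q.num : ℤ) : ℚ)) := by
    unfold psi; push_cast; ring_nf
  rw [he]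
  exact ⟨Rat.num_div_eq_of_coprime hb hcop', Rat.den_div_eq_of_coprime hb hcop'⟩

/-- For `m > 1`, the map `h/k ↦ h/(3h-k)` is an order-reversing bijection (an
involution) of `F^{≥1/2}(B(2m),m)` onto itself, and `h/k ↦ (k-2h)/(2k-3h)` is
an order-reversing bijection (an involution) of `F^{≤1/2}(B(2m),m)` onto
itself. -/
theorem stmt_14 (m : ℕ) (hm : 1 < m) :
    ((∀ q ∈ FareyBRight m, phi q ∈ FareyBRight m) ∧
     (∀ q ∈ FareyBRight m, phi (phi q) = q) ∧
     (∀ q ∈ FareyBRight m, ∀ q' ∈ FareyBRight m, q < q' → phi q' < phi q)) ∧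
    ((∀ q ∈ FareyBLeft m, psi q ∈ FareyBLeft m) ∧
     (∀ q ∈ FareyBLeft m, psi (psi q) = q) ∧
     (∀ q ∈ FareyBLeft m, ∀ q' ∈ FareyBLeft m, q < q' → psi q' < psi q)) := by
  constructor
  · refine ⟨fun q hq => ?_, fun q hq => ?_, fun q hq q' hq' hlt => ?_⟩
    · rw [mem_right_iff] at hq ⊢
      obtain ⟨h1, h2, h3, h4⟩ := hq
      obtain ⟨e1, e2⟩ := phi_num_den q h1 h2
      rw [e1, e2]; omega
    · rw [mem_right_iff] at hq
      obtain ⟨h1, h2, h3, h4⟩ := hq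
      obtain ⟨e1, e2⟩ := phi_num_den q h1 h2
      have e1Q : (((phi q).num : ℚ)) = (q.num : ℚ) := by exact_mod_cast e1
      have e2Q : (((phi q).den : ℚ)) = 3 * (q.num : ℚ) - (q.den : ℚ) := by
        exact_mod_cast e2
      conv_lhs => rw [phi, e1Q, e2Q]
      rw [show 3 * (q.num : ℚ) - (3 * (q.num : ℚ) - (q.den : ℚ)) = (q.den : ℚ) by ring]
      exact Rat.num_div_den q
    · rw [mem_right_iff] at hq hq'
      obtain ⟨h1, h2, h3, h4⟩ := hq
      obtain ⟨h1', h2', h3', h4'⟩ := hq'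
      have hd : 1 ≤ (q.den : ℤ) := by exact_mod_cast q.pos
      have hd' : 1 ≤ (q'.den : ℤ) := by exact_mod_cast q'.pos
      have hcross : q.num * (q'.den : ℤ) < q'.num * (q.den : ℤ) := by
        have := hlt
        rw [← Rat.num_div_den q, ← Rat.num_div_den q',
          div_lt_div_iff₀ (den_posQ q) (den_posQ q')] at this
        exact_mod_cast this
      have hbq : (0:ℚ) < 3 * (q.num : ℚ) - (q.den : ℚ) := by
        have h : (0:ℤ) < 3 * q.num - (q.den : ℤ) := by omega
        exact_mod_cast h
      have hbq' : (0:ℚ) < 3 * (q'.num : ℚ) - (q'.den : ℚ) := by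
        have h : (0:ℤ) < 3 * q'.num - (q'.den : ℤ) := by omega
        exact_mod_cast h
      rw [phi, phi, div_lt_div_iff₀ hbq' hbq]
      have key : q'.num * (3 * q.num - (q.den : ℤ)) < q.num * (3 * q'.num - (q'.den : ℤ)) := by
        nlinarith [hcross]
      exact_mod_cast key
  · refine ⟨fun q hq => ?_, fun q hq => ?_, fun q hq q' hq' hlt => ?_⟩
    · rw [mem_left_iff] at hq ⊢
      obtain ⟨h1, h2, h3⟩ := hq
      obtain ⟨e1, e2⟩ := psi_num_den q h1 h2
      have hd : 1 ≤ (q.den : ℤ) := by exact_mod_cast q.pos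
      rw [e1, e2]; omega
    · rw [mem_left_iff] at hq
      obtain ⟨h1, h2, h3⟩ := hq
      obtain ⟨e1, e2⟩ := psi_num_den q h1 h2
      have e1Q : (((psi q).num : ℚ)) = (q.den : ℚ) - 2 * (q.num : ℚ) := by exact_mod_cast e1
      have e2Q : (((psi q).den : ℚ)) = 2 * (q.den : ℚ) - 3 * (q.num : ℚ) := by
        exact_mod_cast e2
      conv_lhs => rw [psi, e1Q, e2Q]
      rw [show 2 * (q.den : ℚ) - 3 * (q.num : ℚ) - 2 * ((q.den : ℚ) - 2 * (q.num : ℚ))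
            = (q.num : ℚ) by ring,
          show 2 * (2 * (q.den : ℚ) - 3 * (q.num : ℚ))
            - 3 * ((q.den : ℚ) - 2 * (q.num : ℚ)) = (q.den : ℚ) by ring]
      exact Rat.num_div_den q
    · rw [mem_left_iff] at hq hq'
      obtain ⟨h1, h2, h3⟩ := hq
      obtain ⟨h1', h2', h3'⟩ := hq'
      have hd : 1 ≤ (q.den : ℤ) := by exact_mod_cast q.pos
      have hd' : 1 ≤ (q'.den : ℤ) := by exact_mod_cast q'.pos
      have hcross : q.num * (q'.den : ℤ) < q'.num * (q.den : ℤ) := by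
        have := hlt
        rw [← Rat.num_div_den q, ← Rat.num_div_den q',
          div_lt_div_iff₀ (den_posQ q) (den_posQ q')] at this
        exact_mod_cast this
      have hbq : (0:ℚ) < 2 * (q.den : ℚ) - 3 * (q.num : ℚ) := by
        have h : (0:ℤ) < 2 * (q.den : ℤ) - 3 * q.num := by omega
        exact_mod_cast h
      have hbq' : (0:ℚ) < 2 * (q'.den : ℚ) - 3 * (q'.num : ℚ) := by
        have h : (0:ℤ) < 2 * (q'.den : ℤ) - 3 * q'.num := by omega
        exact_mod_cast h
      rw [psi, psi, div_lt_div_iff₀ hbq' hbq]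
      have key : ((q'.den : ℤ) - 2 * q'.num) * (2 * (q.den : ℤ) - 3 * q.num)
          < ((q.den : ℤ) - 2 * q.num) * (2 * (q'.den : ℤ) - 3 * q'.num) := by
        nlinarith [hcross]
      exact_mod_cast key
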